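/- Let A be a unital complex Banach algebra and let D, h, δ ∈ A with hδ = δh, and assume that cosh(Dh) := Σ_{n≥0} D^{2n}h^{2n}/(2n)! is invertible in A. Then for all real t sufficiently close to 0 the element cosh(D(h+tδ)) := Σ_{n≥0} D^{2n}(h+tδ)^{2n}/(2n)! is invertible, and the map t ↦ cosh(D(h+tδ))^{-1} is differentiable at t = 0 with derivative −cosh(Dh)^{-1}·D·sinh(Dh)·δ·cosh(Dh)^{-1}, where sinh(Dh) := Σ_{n≥0} D^{2n+1}h^{2n+1}/(2n+1)!. -/

import Mathlib

/-!
Since `h` and `δ` commute, the noncommutative Leibniz rule collapses and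
`t ↦ D^(k+1) (h + tδ)^(k+1) / (k+1)!` has derivative `D · (D^k (h + tδ)^k / k!) · δ`.
For `|t| < 1` these derivatives are dominated by an exponential-type series, so the cosh series
can be differentiated termwise, and its derivative at `0` is `D · sinh(Dh) · δ`. The units form an
open set on which inversion has derivative `y ↦ -u⁻¹ y u⁻¹`; the chain rule finishes the proof.
-/

open scoped Nat

open Filter Function

theorem HasDerivAt.ringInverse {𝕜 R : Type*} [NontriviallyNormedField 𝕜] [NormedRing R]
    [HasSummableGeomSeries R] [NormedAlgebra 𝕜 R] {f : 𝕜 → R} {f' : R} {x : 𝕜} {u : Rˣ}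
    (hf : HasDerivAt f f' x) (hfx : f x = u) :
    HasDerivAt (fun t => Ring.inverse (f t)) (-(↑u⁻¹ * f' * ↑u⁻¹)) x := by
  have hinv := hasFDerivAt_ringInverse (𝕜 := 𝕜) u
  rw [← hfx] at hinv
  exact (hinv.comp_hasDerivAt x hf).congr_deriv (by simp [mul_assoc])

theorem hasDerivAt_add_smul_pow_succ {A : Type*} [NormedRing A] [NormedAlgebra ℝ A] {h δ : A}
    (hc : Commute h δ) (n : ℕ) (y : ℝ) :
    HasDerivAt (fun t : ℝ => (h + t • δ) ^ (n + 1)) ((n + 1) • ((h + y • δ) ^ n * δ)) y := by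
  have hline : HasDerivAt (fun t : ℝ => h + t • δ) δ y := by
    simpa using ((hasDerivAt_id y).smul_const δ).const_add h
  have hcy : Commute (h + y • δ) δ := hc.add_left ((Commute.refl δ).smul_left y)
  convert hline.fun_pow' (n + 1) using 1
  rw [Finset.sum_congr rfl fun i hi => ?_, Finset.sum_const, Finset.card_range]
  rw [Finset.mem_range] at hi
  rw [Nat.pred_succ, mul_assoc, ← (hcy.pow_left i).eq, ← mul_assoc, ← pow_add,
    Nat.sub_add_cancel (Nat.lt_succ_iff.mp hi)]

noncomputable section OrderedSeries

variable {A : Type*} [NormedRing A] [NormedAlgebra ℂ A]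

/-- `D` and `x` need not commute: this is the paper's ordered `(Dx)^k / k!`. -/
def orderedExpTerm (D x : A) (k : ℕ) : A := ((k ! : ℂ))⁻¹ • (D ^ k * x ^ k)

def orderedCosh (D x : A) : A := ∑' n : ℕ, orderedExpTerm D x (2 * n)

def orderedSinh (D x : A) : A := ∑' n : ℕ, orderedExpTerm D x (2 * n + 1)

theorem norm_orderedExpTerm_le (D x : A) {k : ℕ} (hk : 0 < k) :
    ‖orderedExpTerm D x k‖ ≤ (‖D‖ * ‖x‖) ^ k / k ! := by
  rw [orderedExpTerm, norm_smul, norm_inv, Complex.norm_natCast, mul_pow, inv_mul_eq_div]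
  gcongr
  exact (norm_mul_le _ _).trans (mul_le_mul (norm_pow_le' D hk) (norm_pow_le' x hk)
    (norm_nonneg _) (by positivity))

theorem summable_orderedExpTerm [CompleteSpace A] (D x : A) : Summable (orderedExpTerm D x) :=
  .of_norm_bounded_eventually_nat (Real.summable_pow_div_factorial _)
    (eventually_atTop.2 ⟨1, fun _ hk => norm_orderedExpTerm_le D x hk⟩)

theorem hasDerivAt_orderedExpTerm_succ (D : A) {h δ : A} (hc : Commute h δ) (k : ℕ) (y : ℝ) :
    HasDerivAt (fun t : ℝ => orderedExpTerm D (h + t • δ) (k + 1))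
      (D * orderedExpTerm D (h + y • δ) k * δ) y := by
  refine (((hasDerivAt_add_smul_pow_succ hc k y).const_mul (D ^ (k + 1))).const_smul
    (((k + 1)! : ℂ))⁻¹).congr_deriv ?_
  have hfac : (((k + 1)! : ℂ))⁻¹ * ((k + 1 : ℕ) : ℂ) = ((k ! : ℂ))⁻¹ := by
    rw [Nat.factorial_succ, Nat.cast_mul]
    field_simp
  rw [orderedExpTerm, ← Nat.cast_smul_eq_nsmul ℂ, mul_smul_comm, smul_smul, hfac, pow_succ',
    mul_smul_comm, smul_mul_assoc]
  simp only [mul_assoc]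

theorem orderedCosh_eq_one_add [CompleteSpace A] (D x : A) :
    orderedCosh D x = 1 + ∑' n : ℕ, orderedExpTerm D x (2 * n + 1 + 1) := by
  have hsum : Summable fun n : ℕ => orderedExpTerm D x (2 * n) :=
    (summable_orderedExpTerm D x).comp_injective fun a b hab => by simpa using hab
  rw [orderedCosh, hsum.tsum_eq_zero_add]
  simp [orderedExpTerm, mul_add]

theorem hasDerivAt_orderedCosh_add_smul [CompleteSpace A] (D : A) {h δ : A} (hc : Commute h δ) :
    HasDerivAt (fun t : ℝ => orderedCosh D (h + t • δ)) (D * orderedSinh D h * δ) 0 := by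
  set M := ‖h‖ + ‖δ‖
  have hball : ∀ y ∈ Metric.ball (0 : ℝ) 1, ‖h + y • δ‖ ≤ M := fun y hy => by
    rw [mem_ball_zero_iff] at hy
    calc ‖h + y • δ‖ ≤ ‖h‖ + ‖y‖ * ‖δ‖ := (norm_add_le _ _).trans_eq (by rw [norm_smul])
      _ ≤ M := by
        have : ‖y‖ * ‖δ‖ ≤ ‖δ‖ := mul_le_of_le_one_left (norm_nonneg δ) hy.le
        linarith
  have hodd : Injective fun n : ℕ => 2 * n + 1 := fun a b hab => by simpa using hab
  have hbound : Summable fun n : ℕ => ‖D‖ * ((‖D‖ * M) ^ (2 * n + 1) / (2 * n + 1)!) * ‖δ‖ :=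
    (((Real.summable_pow_div_factorial _).comp_injective hodd).mul_left _).mul_right _
  have hsinh : Summable fun n : ℕ => orderedExpTerm D h (2 * n + 1) :=
    (summable_orderedExpTerm D h).comp_injective hodd
  simp only [orderedCosh_eq_one_add]
  refine HasDerivAt.const_add 1 ?_
  convert hasDerivAt_tsum_of_isPreconnected hbound Metric.isOpen_ball
    (convex_ball (0 : ℝ) 1).isPreconnected
    (fun n y _ => hasDerivAt_orderedExpTerm_succ D hc (2 * n + 1) y)
    (fun n y hy => ?_) (Metric.mem_ball_self one_pos) ?_ (Metric.mem_ball_self one_pos) using 1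
  · rw [zero_smul, add_zero, orderedSinh, (hsinh.mul_left D).tsum_mul_right, hsinh.tsum_mul_left]
  · refine norm_mul₃_le.trans ?_
    gcongr
    exact (norm_orderedExpTerm_le D _ (Nat.succ_pos _)).trans (by gcongr; exact hball y hy)
  · exact (summable_orderedExpTerm D _).comp_injective fun a b hab => by simpa using hab

end OrderedSeries

/-- If `cosh(Dh)` is invertible then `cosh(D(h+tδ))` is invertible for `t` near `0`, and
`t ↦ cosh(D(h+tδ))⁻¹` is differentiable at `0` with derivative
`−cosh(Dh)⁻¹·D·sinh(Dh)·δ·cosh(Dh)⁻¹`. -/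
theorem stmt_6 (A : Type*) [NormedRing A] [NormedAlgebra ℂ A] [CompleteSpace A]
    (D h δ : A) (hcomm : h * δ = δ * h)
    (hunit : IsUnit (∑' n : ℕ, (((2 * n)! : ℂ))⁻¹ • (D ^ (2 * n) * h ^ (2 * n)))) :
    (∀ᶠ t : ℝ in nhds 0,
      IsUnit (∑' n : ℕ, (((2 * n)! : ℂ))⁻¹ • (D ^ (2 * n) * (h + t • δ) ^ (2 * n)))) ∧
    HasDerivAt
      (fun t : ℝ =>
        Ring.inverse (∑' n : ℕ, (((2 * n)! : ℂ))⁻¹ • (D ^ (2 * n) * (h + t • δ) ^ (2 * n))))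
      (-(Ring.inverse (∑' n : ℕ, (((2 * n)! : ℂ))⁻¹ • (D ^ (2 * n) * h ^ (2 * n))) * D *
          (∑' n : ℕ, (((2 * n + 1)! : ℂ))⁻¹ • (D ^ (2 * n + 1) * h ^ (2 * n + 1))) * δ *
          Ring.inverse (∑' n : ℕ, (((2 * n)! : ℂ))⁻¹ • (D ^ (2 * n) * h ^ (2 * n)))))
      0 := by
  change IsUnit (orderedCosh D h) at hunit
  change (∀ᶠ t : ℝ in nhds 0, IsUnit (orderedCosh D (h + t • δ))) ∧
    HasDerivAt (fun t : ℝ => Ring.inverse (orderedCosh D (h + t • δ)))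
      (-(Ring.inverse (orderedCosh D h) * D * orderedSinh D h * δ *
        Ring.inverse (orderedCosh D h))) 0
  obtain ⟨u, hu⟩ := hunit
  have hderiv := hasDerivAt_orderedCosh_add_smul D hcomm
  have hu₀ : orderedCosh D (h + (0 : ℝ) • δ) = u := by rw [zero_smul, add_zero, hu]
  have hunits : {x : A | IsUnit x} ∈ nhds (orderedCosh D (h + (0 : ℝ) • δ)) :=
    hu₀ ▸ Units.isOpen.mem_nhds u.isUnit
  refine ⟨hderiv.continuousAt.eventually_mem hunits, ?_⟩
  rw [← hu, Ring.inverse_unit]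
  simpa only [mul_assoc] using hderiv.ringInverse hu₀
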